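/- Let p ≡ 1 (mod 4) be prime, ψ a nontrivial additive character of F_p, ρ a quartic character of F_p×, and A, B ∈ F_p× with A, B squares in F_p× and 2 a square in F_p. Then the quartic-twisted Salié sum evaluates on the diagonal inputs: χ₂(AB) ψ(−B²(8A)⁻¹) ∑_{b∈F_p×} ρ(b) ψ((16A)⁻¹B²(b + b⁻¹)) = ∑_{x∈F_p} ψ(Ax⁴ + Bx²) − ∑_{x∈F_p} ψ(Ax² + Bx). -/

import Mathlib

/-!
Write `χ` for the quadratic character and `c = B² / (16 A)`. Both sides equal
`χ(AB) ∑ᵤ χ(u) ψ(c((u + 2)² − 4))`.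

On the right, `#{x | x² = t} = 1 + χ(t)` turns the difference of the two sums into
`∑ₜ χ(t) ψ(At² + Bt)`, and `t = Bu / (4A)` completes the square.

On the left, `ρ² = χ` forces `ρ⁴ = 1`, so `ρ(b⁻¹) = χ(b) ρ(b)`; summing over `b = v²` therefore
gives twice the Salié sum as `∑ᵥ χ(v) ψ(c(v² + v⁻²))`. Grouping `v` by `s = v + v⁻¹`, the values of
`χ` on a fibre add up to `χ(s − 2) + χ(s + 2)` (as `v + v⁻¹ − 2 = v (v⁻¹ − 1)²` and the fibre is
counted by the square roots of `s² − 4`), and `χ(−1) = 1` folds the two terms together. Finally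
`−B² / (8A) = −2c`, so the prefactor turns `(u + 2)² − 2` into `(u + 2)² − 4`.
-/

open Finset

theorem sum_units_eq_sum_of_map_zero {G₀ M : Type*} [GroupWithZero G₀] [Fintype G₀]
    [DecidableEq G₀] [AddCommMonoid M] (f : G₀ → M) (hf : f 0 = 0) :
    ∑ b : G₀ˣ, f b = ∑ b, f b := by
  rw [← sum_erase univ hf, sum_subtype (univ.erase 0) (p := (· ≠ 0)) (by simp)]
  exact Fintype.sum_equiv unitsEquivNeZero _ _ fun _ => rfl

section

variable {F : Type*} [Field F] [Fintype F] [DecidableEq F] {R : Type*} [CommRing R]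

theorem sum_quadraticChar_mul_eq_mul_sum_mul_left {d : F} (hd : d ≠ 0) (f : F → R) :
    ∑ t, (quadraticChar F t : R) * f t =
      quadraticChar F d * ∑ u, (quadraticChar F u : R) * f (d * u) := by
  rw [mul_sum]
  exact (Fintype.sum_bijective (d * ·) (mulLeft_bijective₀ d hd) _ _ fun u => by
    rw [map_mul, Int.cast_mul, mul_assoc]).symm

theorem sum_comp_sq (hF : ringChar F ≠ 2) (f : F → R) :
    ∑ x, f (x ^ 2) = ∑ t, f t + ∑ t, (quadraticChar F t : R) * f t := by
  rw [← sum_fiberwise univ (· ^ 2) fun x => f (x ^ 2), ← sum_add_distrib]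
  refine sum_congr rfl fun t _ => ?_
  rw [sum_congr rfl fun x hx => congrArg f (mem_filter.1 hx).2, sum_const, nsmul_eq_mul]
  have hcard := quadraticChar_card_sqrts hF t
  rw [Set.toFinset_ofPred] at hcard
  rw [← Int.cast_natCast, hcard]
  push_cast
  ring

theorem card_filter_add_inv_eq_card_filter_sq (hF : ringChar F ≠ 2) (s : F) :
    #{v | v + v⁻¹ = s ∧ v ≠ 0} = #{w : F | w ^ 2 = s ^ 2 - 4} := by
  have h2 : (2 : F) ≠ 0 := Ring.two_ne_zero hF
  refine card_nbij' (fun v => 2 * v - s) (fun w => (w + s) / 2) ?_ ?_ ?_ ?_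
  · intro v hv
    obtain ⟨hvs, hv0⟩ := (mem_filter.1 hv).2
    simp only [coe_filter, mem_univ, true_and, Set.mem_ofPred_eq]
    rw [← hvs]
    field_simp
    ring
  · intro w hw
    replace hw : w ^ 2 = s ^ 2 - 4 := (mem_filter.1 hw).2
    have hws : w + s ≠ 0 := fun h =>
      mul_self_ne_zero.2 h2 (by linear_combination hw - (w - s) * h)
    simp only [coe_filter, mem_univ, true_and, Set.mem_ofPred_eq]
    refine ⟨?_, div_ne_zero hws h2⟩
    field_simp
    linear_combination hw
  · intro v _
    field_simp
    ring
  · intro w _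
    field_simp
    ring

theorem sum_quadraticChar_filter_add_inv (hF : ringChar F ≠ 2) (s : F) :
    ∑ v with v + v⁻¹ = s, quadraticChar F v =
      quadraticChar F (s - 2) + quadraticChar F (s + 2) := by
  have h2 : (2 : F) ≠ 0 := Ring.two_ne_zero hF
  by_cases hs : s = 2
  · subst hs
    have hfiber : ({v | v + v⁻¹ = 2} : Finset F) = {1} := by
      ext v
      simp only [mem_filter, mem_univ, true_and, mem_singleton]
      refine ⟨fun h => ?_, fun h => by rw [h]; norm_num⟩
      have hv : v ≠ 0 := by rintro rfl; exact h2 (by simpa using h.symm)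
      field_simp at h
      linear_combination (exp := 2) h
    rw [hfiber, sum_singleton, sub_self, show (2 : F) + 2 = 2 ^ 2 by ring,
      quadraticChar_sq_one' h2]
    simp
  have hs2 : s - 2 ≠ 0 := sub_ne_zero.2 hs
  rw [← sum_filter_of_ne (p := (· ≠ 0)) fun v _ hv h0 => hv (h0 ▸ quadraticChar_zero),
    filter_filter]
  have hfiber : ∀ v ∈ ({v | v + v⁻¹ = s ∧ v ≠ 0} : Finset F),
      quadraticChar F v = quadraticChar F (s - 2) := by
    intro v hv
    obtain ⟨hvs, hv0⟩ := (mem_filter.1 hv).2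
    have hv1 : v⁻¹ - 1 ≠ 0 := by
      intro h
      rw [sub_eq_zero, inv_eq_one] at h
      subst h
      exact hs (by rw [← hvs]; norm_num)
    rw [← hvs, show v + v⁻¹ - 2 = v * (v⁻¹ - 1) ^ 2 by field_simp; ring, map_mul,
      quadraticChar_sq_one' hv1, mul_one]
  rw [sum_congr rfl hfiber, sum_const, card_filter_add_inv_eq_card_filter_sq hF,
    ← Set.toFinset_ofPred, nsmul_eq_mul, quadraticChar_card_sqrts hF,
    show s ^ 2 - 4 = (s - 2) * (s + 2) by ring, map_mul]
  linear_combination quadraticChar F (s + 2) * quadraticChar_sq_one hs2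

theorem sum_quadraticChar_mul_comp_add_inv (hF : ringChar F ≠ 2)
    (hneg : quadraticChar F (-1) = 1) (g : F → R) (hg : ∀ s, g (-s) = g s) :
    ∑ v, (quadraticChar F v : R) * g (v + v⁻¹) = 2 * ∑ u, (quadraticChar F u : R) * g (u + 2) := by
  have hfiber (s : F) : ∑ v with v + v⁻¹ = s, (quadraticChar F v : R) * g (v + v⁻¹) =
      ((quadraticChar F (s - 2) : R) + quadraticChar F (s + 2)) * g s := by
    rw [sum_congr rfl fun v hv => by rw [(mem_filter.1 hv).2], ← sum_mul, ← Int.cast_sum,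
      sum_quadraticChar_filter_add_inv hF, Int.cast_add]
  have hreflect : ∑ s, (quadraticChar F (s + 2) : R) * g s =
      ∑ s, (quadraticChar F (s - 2) : R) * g s :=
    Fintype.sum_equiv (Equiv.neg F) _ _ fun s => by
      rw [Equiv.neg_apply, hg, show s + 2 = -1 * (-s - 2) by ring, map_mul, hneg, one_mul]
  have hshift : ∑ s, (quadraticChar F (s - 2) : R) * g s =
      ∑ u, (quadraticChar F u : R) * g (u + 2) :=
    Fintype.sum_equiv (Equiv.subRight 2) _ _ fun s => by simp
  rw [← sum_fiberwise univ fun v => v + v⁻¹]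
  simp only [hfiber, add_mul, sum_add_distrib, hreflect, hshift, two_mul]

theorem MulChar.apply_inv_of_sq_eq (ρ : MulChar F R)
    (hρ : ρ ^ 2 = (quadraticChar F).ringHomComp (Int.castRingHom R)) (b : F) :
    ρ b⁻¹ = quadraticChar F b * ρ b := by
  have h4 : ρ ^ 2 * ρ ^ 2 = 1 := by
    rw [hρ, ← sq]
    exact ((quadraticChar_isQuadratic F).comp _).sq_eq_one
  have hinv : ρ⁻¹ = ρ ^ 2 * ρ := inv_eq_of_mul_eq_one_right (by rw [← h4]; group)
  rw [← MulChar.inv_apply', hinv, MulChar.mul_apply, hρ, MulChar.ringHomComp_apply]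
  rfl

theorem sum_quadraticChar_mul_comp_sq_add_inv (hF : ringChar F ≠ 2) (ρ : MulChar F R)
    (hρ : ρ ^ 2 = (quadraticChar F).ringHomComp (Int.castRingHom R)) (G : F → R) :
    ∑ v, (quadraticChar F v : R) * G (v ^ 2 + (v ^ 2)⁻¹) = 2 * ∑ b, ρ b * G (b + b⁻¹) := by
  have hsq (v : F) : (quadraticChar F v : R) = ρ (v ^ 2) := by
    rw [map_pow, ← MulChar.pow_apply' ρ two_ne_zero, hρ]
    rfl
  have hinv : ∑ t, (quadraticChar F t : R) * (ρ t * G (t + t⁻¹)) = ∑ b, ρ b * G (b + b⁻¹) :=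
    Fintype.sum_equiv (Equiv.inv F) _ _ fun t => by
      rw [← mul_assoc, ← MulChar.apply_inv_of_sq_eq ρ hρ, Equiv.inv_apply, inv_inv, add_comm]
  simp only [hsq]
  rw [sum_comp_sq hF fun t => ρ t * G (t + t⁻¹), hinv, two_mul]

theorem sum_mulChar_mul_comp_add_inv [IsDomain R] [CharZero R] (hF : ringChar F ≠ 2)
    (hneg : quadraticChar F (-1) = 1) (ρ : MulChar F R)
    (hρ : ρ ^ 2 = (quadraticChar F).ringHomComp (Int.castRingHom R)) (G : F → R) :
    ∑ b, ρ b * G (b + b⁻¹) = ∑ u, (quadraticChar F u : R) * G ((u + 2) ^ 2 - 2) := by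
  have hsq_add : ∑ v, (quadraticChar F v : R) * G (v ^ 2 + (v ^ 2)⁻¹) =
      ∑ v, (quadraticChar F v : R) * G ((v + v⁻¹) ^ 2 - 2) := by
    refine sum_congr rfl fun v _ => ?_
    rcases eq_or_ne v 0 with rfl | hv
    · simp
    · congr 2
      field_simp
      ring
  refine mul_left_cancel₀ two_ne_zero ?_
  rw [← sum_quadraticChar_mul_comp_sq_add_inv hF ρ hρ, hsq_add,
    sum_quadraticChar_mul_comp_add_inv hF hneg (fun s => G (s ^ 2 - 2)) fun s => by rw [neg_sq]]

end

theorem stmt_15_general {p : ℕ} [Fact p.Prime] (hp : p % 4 = 1)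
    (ψ : AddChar (ZMod p) ℂ)
    (ρ : MulChar (ZMod p) ℂ)
    (hρ2 : ρ ^ 2 = (quadraticChar (ZMod p)).ringHomComp (Int.castRingHom ℂ))
    (A B : ZMod p) (hA0 : A ≠ 0) (hB0 : B ≠ 0) :
    ((quadraticChar (ZMod p) (A * B) : ℤ) : ℂ) * ψ (-B ^ 2 * (8 * A)⁻¹) *
        ∑ b : (ZMod p)ˣ,
          ρ (b : ZMod p) * ψ ((16 * A)⁻¹ * B ^ 2 * ((b : ZMod p) + ((b : ZMod p))⁻¹)) =
      (∑ x : ZMod p, ψ (A * x ^ 4 + B * x ^ 2)) - ∑ x : ZMod p, ψ (A * x ^ 2 + B * x) := by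
  have hF : ringChar (ZMod p) ≠ 2 := by
    rw [ZMod.ringChar_zmod_n]
    omega
  have h2 : (2 : ZMod p) ≠ 0 := Ring.two_ne_zero hF
  have hneg : quadraticChar (ZMod p) (-1) = 1 := by
    rw [quadraticChar_neg_one hF, ZMod.card, ZMod.χ₄_nat_one_mod_four hp]
  -- `A * B * (2 * A)⁻¹ ^ 2 = B / (4 * A)`, written so that its character is visibly `χ(AB)`
  have hd : A * B * (2 * A)⁻¹ ^ 2 ≠ 0 := by simp [hA0, hB0, h2]
  have hχd :
      quadraticChar (ZMod p) (A * B * (2 * A)⁻¹ ^ 2) = quadraticChar (ZMod p) (A * B) := by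
    rw [map_mul, quadraticChar_sq_one' (by simp [hA0, h2]), mul_one]
  have hrhs : (∑ x : ZMod p, ψ (A * x ^ 4 + B * x ^ 2)) - ∑ x : ZMod p, ψ (A * x ^ 2 + B * x) =
      ∑ t, (quadraticChar (ZMod p) t : ℂ) * ψ (A * t ^ 2 + B * t) := by
    rw [sub_eq_iff_eq_add', ← sum_comp_sq hF fun t => ψ (A * t ^ 2 + B * t)]
    exact sum_congr rfl fun x _ => by ring_nf
  rw [sum_units_eq_sum_of_map_zero (fun b => ρ b * ψ ((16 * A)⁻¹ * B ^ 2 * (b + b⁻¹)))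
      (by rw [MulChar.map_zero, zero_mul]),
    sum_mulChar_mul_comp_add_inv hF hneg ρ hρ2 fun s => ψ ((16 * A)⁻¹ * B ^ 2 * s), hrhs,
    sum_quadraticChar_mul_eq_mul_sum_mul_left hd fun t => ψ (A * t ^ 2 + B * t), hχd, mul_assoc]
  congr 1
  rw [mul_sum]
  refine sum_congr rfl fun u _ => ?_
  rw [mul_left_comm, ← AddChar.map_add_eq_mul]
  congr 2
  -- so that `field_simp` can see from `h2` that `8` and `16` are nonzero
  simp only [show (8 : ZMod p) = 2 ^ 3 by norm_num, show (16 : ZMod p) = 2 ^ 4 by norm_num]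
  field_simp
  ring

/-- Diagonal evaluation of the quartic-twisted Salié sum:
`χ₂(AB) ψ(−B²(8A)⁻¹) ∑_b ρ(b) ψ((16A)⁻¹B²(b+b⁻¹)) = ∑ₓ ψ(Ax⁴+Bx²) − ∑ₓ ψ(Ax²+Bx)`. -/
theorem stmt_15 {p : ℕ} [Fact p.Prime] (hp : p % 4 = 1)
    (ψ : AddChar (ZMod p) ℂ) (hψ : ψ ≠ 1)
    (ρ : MulChar (ZMod p) ℂ) (hρ : orderOf ρ = 4)
    (hρ2 : ρ ^ 2 = (quadraticChar (ZMod p)).ringHomComp (Int.castRingHom ℂ))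
    (h2 : IsSquare (2 : ZMod p))
    (A B : ZMod p) (hA0 : A ≠ 0) (hAsq : IsSquare A) (hB0 : B ≠ 0) (hBsq : IsSquare B) :
    ((quadraticChar (ZMod p) (A * B) : ℤ) : ℂ) * ψ (-B ^ 2 * (8 * A)⁻¹) *
        ∑ b : (ZMod p)ˣ,
          ρ (b : ZMod p) * ψ ((16 * A)⁻¹ * B ^ 2 * ((b : ZMod p) + ((b : ZMod p))⁻¹)) =
      (∑ x : ZMod p, ψ (A * x ^ 4 + B * x ^ 2)) - ∑ x : ZMod p, ψ (A * x ^ 2 + B * x) :=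
  stmt_15_general hp ψ ρ hρ2 A B hA0 hB0
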